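/- arXiv:0712.0904 — 3 statements merged into one kernel-verified Lean document; each statement's English description precedes it below -/
import Mathlib

section
/- For every γ > 0, the largest root t* of the quadratic 2(1 + 1/γ − c)t² − 2√2·c·t + (1 + 1/γ)ln(1+γ) − c = 0, with c = 1 + 1/(2γ), satisfies t* < 2√2·(γ + 3/4). -/
/-! Multiplied by `γ`, the equation becomes the monic quadratic
`q(t) = t² − 2√2(γ + 1/2)t + (γ + 1)ln(1+γ) − (γ + 1/2) = 0`. The point `T = 2√2(γ + 3/4)` lies to
the right of the vertex of `q` and `q(T) = (γ + 1)(1 + ln(1+γ)) > 0`, so every root of `q` is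
smaller than `T`. -/

lemma lt_of_quadratic_eq_zero {b C t T : ℝ} (hbT : b ≤ T) (hT : 0 < T ^ 2 - 2 * b * T + C)
    (ht : t ^ 2 - 2 * b * t + C = 0) : t < T := by
  by_contra! hTt
  have : 0 ≤ (t - T) * (t + T - 2 * b) := mul_nonneg (by linarith) (by linarith)
  nlinarith

lemma monic_of_quadratic_eq_zero {γ t : ℝ} (hγ : γ ≠ 0)
    (ht : 2 * (1 + 1 / γ - (1 + 1 / (2 * γ))) * t ^ 2
      - 2 * Real.sqrt 2 * (1 + 1 / (2 * γ)) * t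
      + (1 + 1 / γ) * Real.log (1 + γ) - (1 + 1 / (2 * γ)) = 0) :
    t ^ 2 - 2 * (Real.sqrt 2 * (γ + 1 / 2)) * t
      + ((γ + 1) * Real.log (1 + γ) - (γ + 1 / 2)) = 0 := by
  field_simp at ht
  linear_combination ht / 2

lemma quadratic_at_bound (γ : ℝ) :
    (2 * Real.sqrt 2 * (γ + 3 / 4)) ^ 2
      - 2 * (Real.sqrt 2 * (γ + 1 / 2)) * (2 * Real.sqrt 2 * (γ + 3 / 4))
      + ((γ + 1) * Real.log (1 + γ) - (γ + 1 / 2))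
      = (γ + 1) * (1 + Real.log (1 + γ)) := by
  have hsqrt : Real.sqrt 2 ^ 2 = 2 := Real.sq_sqrt (by norm_num)
  linear_combination (γ + 3 / 4) * hsqrt

/-- For every `γ > 0`, every root (in particular the largest root) of the quadratic
`2(1 + 1/γ − c)t² − 2√2·c·t + (1 + 1/γ)ln(1+γ) − c = 0`, with `c = 1 + 1/(2γ)`,
satisfies `t < 2√2·(γ + 3/4)`. -/
theorem stmt_5 (γ : ℝ) (hγ : 0 < γ) (c : ℝ) (hc : c = 1 + 1 / (2 * γ))
    (t : ℝ)
    (hroot : 2 * (1 + 1 / γ - c) * t ^ 2 - 2 * Real.sqrt 2 * c * t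
      + (1 + 1 / γ) * Real.log (1 + γ) - c = 0) :
    t < 2 * Real.sqrt 2 * (γ + 3 / 4) := by
  subst hc
  have hvertex : Real.sqrt 2 * (γ + 1 / 2) ≤ 2 * Real.sqrt 2 * (γ + 3 / 4) := by
    have : 0 ≤ Real.sqrt 2 := Real.sqrt_nonneg 2
    nlinarith
  have hpos : 0 < (γ + 1) * (1 + Real.log (1 + γ)) := by
    have : 0 ≤ Real.log (1 + γ) := Real.log_nonneg (by linarith)
    positivity
  refine lt_of_quadratic_eq_zero hvertex ?_ (monic_of_quadratic_eq_zero hγ.ne' hroot)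
  rwa [quadratic_at_bound]
end

section
/- Fix 0 < p < 2, η > 0, n ≥ 1 and an integer 1 ≤ k ≤ n−1. For every μ ∈ ℝ^n with ∑_{i=1}^n |μ_i|^p ≤ n·η^p, the sum of the n−k smallest squared entries satisfies ∑_{i=k+1}^n μ_{(i)}² ≤ ((2−p)/2)^{2/p} · (p/(2−p)) · η² · n^{2/p} · k^{1−2/p}, where |μ|_{(1)} ≥ … ≥ |μ|_{(n)} are the decreasingly ordered absolute values. -/
lemma key_ineq (p S K t : ℝ) (hp : 0 < p) (hp2 : p < 2) (hS : 0 < S) (hK : 0 < K) (ht : 0 ≤ t) :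
    S * t ^ (2 - p) ≤ K * t ^ 2 + p / (2 - p) * K * ((2 - p) / 2 * S / K) ^ (2 / p) := by
  have h2p : 0 < 2 - p := by linarith
  set c : ℝ := (2 - p) / 2 * S / K with hc
  have hcpos : 0 < c := by positivity
  set L : ℝ := c ^ (2 / p) with hL
  have hLpos : 0 < L := Real.rpow_pos_of_pos hcpos _
  have hLp : L ^ (p / 2) = c := by
    rw [hL, ← Real.rpow_mul hcpos.le]
    rw [show 2 / p * (p / 2) = 1 by field_simp]
    exact Real.rpow_one c
  have hgm := Real.geom_mean_le_arith_mean2_weighted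
    (by linarith : (0:ℝ) ≤ (2 - p)/2) (by linarith : (0:ℝ) ≤ p/2)
    (by positivity : (0:ℝ) ≤ t ^ 2) hLpos.le (by ring)
  have ht2 : (t ^ 2 : ℝ) ^ ((2 - p)/2) = t ^ (2 - p) := by
    rw [← Real.rpow_natCast t 2, ← Real.rpow_mul ht]
    congr 1; push_cast; ring
  rw [ht2, hLp] at hgm
  have hmul := mul_le_mul_of_nonneg_left hgm (by positivity : (0:ℝ) ≤ 2 * K / (2 - p))
  have e1 : 2 * K / (2 - p) * (t ^ (2 - p) * c) = S * t ^ (2 - p) := by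
    rw [hc]; field_simp
  have e2 : 2 * K / (2 - p) * ((2 - p)/2 * t^2 + p/2 * L) = K * t ^ 2 + p / (2 - p) * K * L := by
    field_simp
  rw [e1, e2] at hmul
  exact hmul

/-- Fix `0 < p < 2`, `η > 0`, `n ≥ 1` and `1 ≤ k ≤ n−1`. For every `μ ∈ ℝⁿ` with
`∑ |μ_i|^p ≤ n·η^p`, if `σ` orders the entries by decreasing absolute value, then the sum
of the `n−k` smallest squared entries satisfies
`∑_{i=k+1}^n μ_{(i)}² ≤ ((2−p)/2)^{2/p}·(p/(2−p))·η²·n^{2/p}·k^{1−2/p}`. -/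
theorem stmt_9 (p η : ℝ) (hp : 0 < p) (hp2 : p < 2) (hη : 0 < η)
    (n k : ℕ) (hn : 1 ≤ n) (hk1 : 1 ≤ k) (hkn : k ≤ n - 1)
    (μ : Fin n → ℝ) (hμ : ∑ i, |μ i| ^ p ≤ (n : ℝ) * η ^ p)
    (σ : Equiv.Perm (Fin n)) (hσ : Antitone fun i => |μ (σ i)|) :
    ∑ i ∈ Finset.univ.filter (fun i : Fin n => k ≤ i.val), (μ (σ i)) ^ 2 ≤
      ((2 - p) / 2) ^ (2 / p) * (p / (2 - p)) * η ^ 2 * (n : ℝ) ^ (2 / p)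
        * (k : ℝ) ^ (1 - 2 / p) := by
  have h2p : 0 < 2 - p := by linarith
  have hkn' : k < n := lt_of_le_of_lt hkn (Nat.sub_lt hn one_pos)
  have hkR : (0:ℝ) < (k:ℝ) := by exact_mod_cast hk1
  set S : ℝ := (n:ℝ) * η ^ p with hSdef
  have hSpos : 0 < S := by
    have : (0:ℝ) < (n:ℝ) := by exact_mod_cast hn
    positivity
  set a : Fin n → ℝ := fun i => |μ (σ i)| with ha
  have ha0 : ∀ i, 0 ≤ a i := fun i => abs_nonneg _
  have hsum : ∑ i, a i ^ p ≤ S := by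
    rw [← Equiv.sum_comp σ (fun i => |μ i| ^ p)] at hμ
    exact hμ
  set K : Fin n := ⟨k, hkn'⟩ with hKdef
  set t := a K with htdef
  have ht0 : 0 ≤ t := ha0 K
  -- head bound
  have hcard : (Finset.univ.filter (fun i : Fin n => i.val < k)).card = k := by
    have : (Finset.univ.filter (fun i : Fin n => i.val < k)) =
        (Finset.univ.filter (fun i : Fin n => i < K)) := by
      apply Finset.filter_congr
      intro i _
      simp [Fin.lt_def, hKdef]
    rw [this]
    have h2 : (Finset.univ.filter (fun i : Fin n => i < K)) = Finset.Iio K := by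
      ext i; simp
    rw [h2, Fin.card_Iio]
  have hhead : (k:ℝ) * t ^ p ≤
      ∑ i ∈ Finset.univ.filter (fun i : Fin n => i.val < k), a i ^ p := by
    calc (k:ℝ) * t ^ p
        = ∑ _i ∈ Finset.univ.filter (fun i : Fin n => i.val < k), t ^ p := by
          rw [Finset.sum_const, hcard, nsmul_eq_mul]
      _ ≤ ∑ i ∈ Finset.univ.filter (fun i : Fin n => i.val < k), a i ^ p := by
          apply Finset.sum_le_sum
          intro i hi
          simp only [Finset.mem_filter] at hi
          have hiK : i ≤ K := le_of_lt (by simpa [Fin.lt_def, hKdef] using hi.2)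
          exact Real.rpow_le_rpow ht0 (hσ hiK) hp.le
  -- tail per-term bound
  have htail : ∑ i ∈ Finset.univ.filter (fun i : Fin n => k ≤ i.val), (μ (σ i)) ^ 2 ≤
      t ^ (2 - p) * ∑ i ∈ Finset.univ.filter (fun i : Fin n => k ≤ i.val), a i ^ p := by
    rw [Finset.mul_sum]
    apply Finset.sum_le_sum
    intro i hi
    simp only [Finset.mem_filter] at hi
    have hKi : K ≤ i := by simpa [Fin.le_def, hKdef] using hi.2
    have hait : a i ≤ t := hσ hKi
    have h1 : (μ (σ i)) ^ 2 = a i ^ (2 - p) * a i ^ p := by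
      rw [← Real.rpow_add' (ha0 i) (by norm_num : (2 - p) + p ≠ 0)]
      rw [show (2 - p) + p = (2:ℝ) by ring]
      rw [show ((2:ℝ)) = ((2:ℕ):ℝ) by norm_num, Real.rpow_natCast]
      rw [ha]; exact (sq_abs _).symm
    rw [h1]
    apply mul_le_mul_of_nonneg_right _ (Real.rpow_nonneg (ha0 i) p)
    exact Real.rpow_le_rpow (ha0 i) hait (by linarith)
  -- split sum
  have hsplit : ∑ i ∈ Finset.univ.filter (fun i : Fin n => i.val < k), a i ^ p +
      ∑ i ∈ Finset.univ.filter (fun i : Fin n => k ≤ i.val), a i ^ p = ∑ i, a i ^ p := by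
    rw [← Finset.sum_filter_add_sum_filter_not Finset.univ (fun i : Fin n => i.val < k)
      (fun i => a i ^ p)]
    congr 1
    apply Finset.sum_congr _ (fun _ _ => rfl)
    apply Finset.filter_congr
    intro i _
    simp [not_lt]
  have hT : ∑ i ∈ Finset.univ.filter (fun i : Fin n => k ≤ i.val), a i ^ p ≤
      S - (k:ℝ) * t ^ p := by linarith
  have hstep : ∑ i ∈ Finset.univ.filter (fun i : Fin n => k ≤ i.val), (μ (σ i)) ^ 2 ≤
      S * t ^ (2 - p) - (k:ℝ) * t ^ 2 := by
    have h2 : t ^ (2 - p) * t ^ p = t ^ 2 := by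
      rw [← Real.rpow_add' ht0 (by norm_num : (2 - p) + p ≠ 0)]
      rw [show (2 - p) + p = (2:ℝ) by ring]
      rw [show ((2:ℝ)) = ((2:ℕ):ℝ) by norm_num, Real.rpow_natCast]
    calc ∑ i ∈ Finset.univ.filter (fun i : Fin n => k ≤ i.val), (μ (σ i)) ^ 2
        ≤ t ^ (2 - p) * ∑ i ∈ Finset.univ.filter (fun i : Fin n => k ≤ i.val), a i ^ p := htail
      _ ≤ t ^ (2 - p) * (S - (k:ℝ) * t ^ p) :=
          mul_le_mul_of_nonneg_left hT (Real.rpow_nonneg ht0 _)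
      _ = S * t ^ (2 - p) - (k:ℝ) * (t ^ (2 - p) * t ^ p) := by ring
      _ = S * t ^ (2 - p) - (k:ℝ) * t ^ 2 := by rw [h2]
  have hkey := key_ineq p S (k:ℝ) t hp hp2 hSpos hkR ht0
  -- identify the constant
  have hM : p / (2 - p) * (k:ℝ) * ((2 - p) / 2 * S / (k:ℝ)) ^ (2 / p) =
      ((2 - p) / 2) ^ (2 / p) * (p / (2 - p)) * η ^ 2 * (n : ℝ) ^ (2 / p)
        * (k : ℝ) ^ (1 - 2 / p) := by
    have hnR : (0:ℝ) < (n:ℝ) := by exact_mod_cast hn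
    have hηp : (0:ℝ) < η ^ p := Real.rpow_pos_of_pos hη p
    have e1 : ((2 - p) / 2 * S / (k:ℝ)) ^ (2 / p) =
        ((2 - p) / 2) ^ (2 / p) * (n:ℝ) ^ (2 / p) * (η ^ p) ^ (2 / p) / (k:ℝ) ^ (2 / p) := by
      rw [hSdef, Real.div_rpow (by positivity) hkR.le,
        Real.mul_rpow (by positivity) (by positivity),
        Real.mul_rpow (by positivity) (by positivity)]
      ring
    have e2 : (η ^ p) ^ (2 / p) = η ^ 2 := by
      rw [← Real.rpow_mul hη.le, show p * (2 / p) = 2 by field_simp,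
        show ((2:ℝ)) = ((2:ℕ):ℝ) by norm_num, Real.rpow_natCast]
    have e3 : (k:ℝ) ^ (1 - 2 / p) = (k:ℝ) / (k:ℝ) ^ (2 / p) := by
      rw [Real.rpow_sub hkR, Real.rpow_one]
    have hkp : (0:ℝ) < (k:ℝ) ^ (2 / p) := Real.rpow_pos_of_pos hkR _
    rw [e1, e2, e3]
    field_simp
  rw [hM] at hkey
  linarith
end

section
/- Let π_n(k) = (λ^k/k!)/(∑_{j=0}^n λ^j/j!) be the truncated Poisson distribution with parameter λ ≥ 1 and λ ≤ n (λ a positive integer). Then for all 1 ≤ k ≤ n: (λ/k)^k · e^{k−λ−1/(12k)}/√(2πk) < π_n(k) < (λ/k)^{k+1/2} · e^{k−λ+1/(12λ)}. -/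
/-!
Stirling's formula with Robbins' remainder, `√(2πk) (k/e)^k ≤ k! ≤ √(2πk) (k/e)^k e^{1/(12k)}`,
bounds the Poisson weight `λ^k/k!` from both sides. The normalizing sum lies strictly between its
single term `λ^λ/λ!` and the full series `e^λ`; dividing the weight bounds by these gives the two
estimates.
-/

open Finset Nat

-- `Real` stays closed outside this section: the theorem binds the name `π`.
section

open Real

namespace Stirling

theorem monotone_log_stirlingSeq_succ_sub_inv :
    Monotone fun m : ℕ => log (stirlingSeq (m + 1)) - 1 / (12 * ((m : ℝ) + 1)) := by
  refine monotone_nat_of_le_succ fun m => ?_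
  have robbins := log_stirlingSeq_sdiff_le (m + 1)
  have telescope : 1 / (12 * ((m : ℝ) + 1)) - 1 / (12 * ((m : ℝ) + 1 + 1)) =
      1 / (12 * ((m : ℝ) + 1) * ((m : ℝ) + 1 + 1)) := by
    field_simp
    ring
  push_cast at robbins ⊢
  linarith

theorem stirlingSeq_succ_le (m : ℕ) :
    stirlingSeq (m + 1) ≤ √π * exp (1 / (12 * ((m : ℝ) + 1))) := by
  have hlim : Filter.Tendsto (fun j : ℕ => log (stirlingSeq (j + 1))) Filter.atTop
      (nhds (log √π)) :=
    (continuousAt_log (by positivity)).tendsto.comp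
      (tendsto_stirlingSeq_sqrt_pi.comp (Filter.tendsto_add_atTop_nat 1))
  have hle : log (stirlingSeq (m + 1)) - 1 / (12 * ((m : ℝ) + 1)) ≤ log √π := by
    refine ge_of_tendsto hlim (Filter.eventually_atTop.2 ⟨m, fun j hj => ?_⟩)
    have hc : 0 < 1 / (12 * ((j : ℝ) + 1)) := by positivity
    linarith [monotone_log_stirlingSeq_succ_sub_inv hj]
  rw [← exp_le_exp, exp_sub, exp_log (stirlingSeq'_pos m), exp_log (by positivity),
    div_le_iff₀ (exp_pos _)] at hle
  exact hle

theorem factorial_le_stirling {n : ℕ} (hn : n ≠ 0) :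
    (n ! : ℝ) ≤ √(2 * π * n) * (n / exp 1) ^ n * exp (1 / (12 * n)) := by
  obtain ⟨m, rfl⟩ : ∃ m, n = m + 1 := ⟨n - 1, by omega⟩
  have hpos : 0 < √(2 * (m + 1 : ℕ)) * (((m + 1 : ℕ) : ℝ) / exp 1) ^ (m + 1) := by positivity
  refine ((div_le_iff₀ hpos).1 (stirlingSeq_succ_le m)).trans_eq ?_
  rw [show 2 * π * ((m + 1 : ℕ) : ℝ) = π * (2 * ((m + 1 : ℕ) : ℝ)) by ring, sqrt_mul pi_pos.le]
  push_cast
  ring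

end Stirling

theorem Real.sum_range_pow_div_factorial_lt_exp {x : ℝ} (hx : 0 < x) (n : ℕ) :
    ∑ i ∈ range n, x ^ i / i ! < exp x := by
  have h := sum_le_exp_of_nonneg hx.le (n + 1)
  rw [sum_range_succ] at h
  have : 0 < x ^ n / n ! := by positivity
  linarith

theorem pow_div_factorial_lt_sum_range {x : ℝ} (hx : 0 ≤ x) {j n : ℕ} (hj : j ≠ 0)
    (hjn : j ≤ n) : x ^ j / j ! < ∑ i ∈ range (n + 1), x ^ i / i ! := by
  have hsub : ({0, j} : Finset ℕ) ⊆ range (n + 1) := by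
    intro i hi
    simp only [mem_insert, mem_singleton] at hi
    rw [mem_range]
    omega
  have h := sum_le_sum_of_subset_of_nonneg (f := fun i => x ^ i / (i ! : ℝ)) hsub
    fun i _ _ => by positivity
  rw [sum_pair (Ne.symm hj)] at h
  simp only [pow_zero, factorial_zero, cast_one, div_one] at h
  linarith

theorem stirling_le_pow_div_factorial {x : ℝ} (hx : 0 ≤ x) {k : ℕ} (hk : k ≠ 0) :
    (x / k) ^ k * exp (k - 1 / (12 * k)) / √(2 * π * k) ≤ x ^ k / k ! := by
  have h := Stirling.factorial_le_stirling hk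
  rw [div_le_div_iff₀ (by positivity) (by positivity)]
  calc (x / k) ^ k * exp (k - 1 / (12 * k)) * k !
      ≤ (x / k) ^ k * exp (k - 1 / (12 * k)) *
          (√(2 * π * k) * (k / exp 1) ^ k * exp (1 / (12 * k))) := by gcongr
    _ = x ^ k * √(2 * π * k) := by
      rw [div_pow, div_pow, exp_one_pow, exp_sub]
      field_simp

theorem pow_div_factorial_le_stirling {x : ℝ} (hx : 0 ≤ x) {k : ℕ} (hk : k ≠ 0) :
    x ^ k / k ! ≤ (x / k) ^ k * exp k / √(2 * π * k) := by
  have h := Stirling.le_factorial_stirling k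
  rw [div_le_div_iff₀ (by positivity) (by positivity)]
  calc x ^ k * √(2 * π * k) = (x / k) ^ k * exp k * (√(2 * π * k) * (k / exp 1) ^ k) := by
        rw [div_pow, div_pow, exp_one_pow]
        field_simp
    _ ≤ (x / k) ^ k * exp k * k ! := by gcongr

end

theorem stmt_11_general (n lam : ℕ) (hlam1 : 1 ≤ lam) (hlamn : lam ≤ n) (k : ℕ)
    (hk1 : 1 ≤ k)
    (π : ℕ → ℝ)
    (hπ : ∀ m, π m = ((lam : ℝ) ^ m / (Nat.factorial m))
        / ∑ j ∈ Finset.range (n + 1), (lam : ℝ) ^ j / (Nat.factorial j)) :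
    ((lam : ℝ) / k) ^ k * Real.exp ((k : ℝ) - lam - 1 / (12 * k))
        / Real.sqrt (2 * Real.pi * k) < π k ∧
    π k < ((lam : ℝ) / k) ^ ((k : ℝ) + 1 / 2)
        * Real.exp ((k : ℝ) - lam + 1 / (12 * lam)) := by
  have hlam0 : lam ≠ 0 := by omega
  have hk0 : k ≠ 0 := by omega
  set S := ∑ j ∈ range (n + 1), (lam : ℝ) ^ j / (j ! : ℝ)
  have hS_lt : S < Real.exp lam := Real.sum_range_pow_div_factorial_lt_exp (by positivity) _
  have hS_gt : (lam : ℝ) ^ lam / lam ! < S :=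
    pow_div_factorial_lt_sum_range (by positivity) hlam0 hlamn
  have hS_pos : 0 < S := lt_trans (by positivity) hS_gt
  have ht : (0 : ℝ) < lam ^ k / k ! := by positivity
  rw [hπ]
  constructor
  · calc _ = (lam / k : ℝ) ^ k * Real.exp (k - 1 / (12 * k)) / Real.sqrt (2 * Real.pi * k)
            / Real.exp lam := by
          rw [sub_right_comm, Real.exp_sub]
          ring
      _ ≤ (lam : ℝ) ^ k / k ! / Real.exp lam := by
          gcongr ?_ / _
          exact stirling_le_pow_div_factorial (Nat.cast_nonneg _) hk0
      _ < _ := div_lt_div_of_pos_left ht hS_pos hS_lt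
  · have hlam_lower := stirling_le_pow_div_factorial (x := lam) (by positivity) hlam0
    rw [div_self (by positivity), one_pow, one_mul] at hlam_lower
    calc _ < (lam : ℝ) ^ k / k ! / ((lam : ℝ) ^ lam / lam !) :=
          div_lt_div_of_pos_left ht (by positivity) hS_gt
      _ ≤ (lam / k : ℝ) ^ k * Real.exp k / Real.sqrt (2 * Real.pi * k) /
            (Real.exp (lam - 1 / (12 * lam)) / Real.sqrt (2 * Real.pi * lam)) := by
          gcongr ?_ / ?_
          exact pow_div_factorial_le_stirling (Nat.cast_nonneg _) hk0
      _ = _ := by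
          rw [Real.rpow_add (by positivity), Real.rpow_natCast, ← Real.sqrt_eq_rpow,
            Real.sqrt_div' _ (by positivity), Real.sqrt_mul' _ (by positivity : (0 : ℝ) ≤ k),
            Real.sqrt_mul' _ (by positivity : (0 : ℝ) ≤ lam), Real.exp_sub, Real.exp_add,
            Real.exp_sub]
          field_simp

/-- Truncated Poisson bounds: with `π_n(k) = (λ^k/k!)/(∑_{j=0}^n λ^j/j!)`, `λ` a positive
integer with `1 ≤ λ ≤ n`, for all `1 ≤ k ≤ n`:
`(λ/k)^k·e^{k−λ−1/(12k)}/√(2πk) < π_n(k) < (λ/k)^{k+1/2}·e^{k−λ+1/(12λ)}`. -/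
theorem stmt_11 (n lam : ℕ) (hlam1 : 1 ≤ lam) (hlamn : lam ≤ n) (k : ℕ)
    (hk1 : 1 ≤ k) (hkn : k ≤ n)
    (π : ℕ → ℝ)
    (hπ : ∀ m, π m = ((lam : ℝ) ^ m / (Nat.factorial m))
        / ∑ j ∈ Finset.range (n + 1), (lam : ℝ) ^ j / (Nat.factorial j)) :
    ((lam : ℝ) / k) ^ k * Real.exp ((k : ℝ) - lam - 1 / (12 * k))
        / Real.sqrt (2 * Real.pi * k) < π k ∧
    π k < ((lam : ℝ) / k) ^ ((k : ℝ) + 1 / 2)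
        * Real.exp ((k : ℝ) - lam + 1 / (12 * lam)) :=
  stmt_11_general n lam hlam1 hlamn k hk1 π hπ
end
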